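/- Let Z, Z' be as above and suppose {F_1,…,F_p}, with deg F_i = (d_{i1},d_{i2}), is a good set of minimal separators of the point P_i of multiplicity m_i. Then for every t = (t_1,t_2) ∈ ℕ², the classes of x_0^{t_1−d_{i1}} y_0^{t_2−d_{i2}} F_i, taken over those i with d_{i1} ≤ t_1 and d_{i2} ≤ t_2, form a k-vector space basis of (I_{Z'}/I_Z)_t. -/

import Mathlib

/-!
Formalization of statements from "Separators of fat points in ℙⁿ×ℙᵐ"
(Guardo–Van Tuyl).  The bigraded coordinate ring `R = k[x₀,…,xₙ,y₀,…,y_m]` of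
`ℙⁿ×ℙᵐ` is modelled as `MvPolynomial (Fin (n+1) ⊕ Fin (m+1)) k`, where the
variable `X (Sum.inl i)` is `xᵢ` (degree `(1,0)`) and `X (Sum.inr j)` is `yⱼ`
(degree `(0,1)`); bihomogeneity is weighted homogeneity for the weight `biWeight`.
-/

open MvPolynomial

noncomputable section

/-- The ℕ²-graded coordinate ring `R` of `ℙⁿ×ℙᵐ`. -/
abbrev BiRing (k : Type) [Field k] (n m : ℕ) : Type :=
  MvPolynomial (Fin (n + 1) ⊕ Fin (m + 1)) k

/-- The weight function on the variables giving the ℕ²-grading: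
`deg xᵢ = (1,0)` and `deg yⱼ = (0,1)`. -/
def biWeight (n m : ℕ) : Fin (n + 1) ⊕ Fin (m + 1) → ℕ × ℕ :=
  Sum.elim (fun _ => (1, 0)) (fun _ => (0, 1))

variable {k : Type} [Field k] {n m : ℕ}

/-- `F` is bihomogeneous of degree `d ∈ ℕ²`. -/
def BihomOfDeg (F : BiRing k n m) (d : ℕ × ℕ) : Prop :=
  IsWeightedHomogeneous (biWeight n m) F d

/-- `I` is the defining (prime) ideal of a point of `ℙⁿ×ℙᵐ`: it is generated by
`n` linear forms of degree `(1,0)` and `m` linear forms of degree `(0,1)` which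
are linearly independent (so that they cut out a single point of `ℙⁿ×ℙᵐ`). -/
def IsPointIdeal (I : Ideal (BiRing k n m)) : Prop :=
  ∃ (L : Fin n → BiRing k n m) (L' : Fin m → BiRing k n m),
    (∀ a, BihomOfDeg (L a) (1, 0)) ∧ (∀ b, BihomOfDeg (L' b) (0, 1)) ∧
    LinearIndependent k (Sum.elim L L') ∧
    I = Ideal.span (Set.range L ∪ Set.range L')

/-- The defining ideal `I_Z = I_{P₁}^{m₁} ∩ ⋯ ∩ I_{P_s}^{m_s}` of the fat point
scheme `Z = m₁P₁ + ⋯ + m_sP_s`. -/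
def fatIdeal {s : ℕ} (P : Fin s → Ideal (BiRing k n m)) (mult : Fin s → ℕ) :
    Ideal (BiRing k n m) :=
  ⨅ j, P j ^ mult j

/-- `F` is a separator of the point `Pᵢ` of multiplicity `mᵢ`, where `IZ = I_Z`
and `IZ' = I_{Z'}`: a bihomogeneous form lying in `I_{Z'} \ I_Z`
(equivalently `F ∈ I_{Pᵢ}^{mᵢ-1} \ I_{Pᵢ}^{mᵢ}` and `F ∈ I_{Pⱼ}^{mⱼ}` for `j ≠ i`). -/
def IsSeparator (IZ IZ' : Ideal (BiRing k n m)) (F : BiRing k n m) : Prop :=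
  (∃ d, BihomOfDeg F d) ∧ F ∈ IZ' ∧ F ∉ IZ

/-- `F₁,…,F_p` is a set of minimal separators of `Pᵢ` of multiplicity `mᵢ`:
each `Fⱼ` is a (bihomogeneous) separator, their residue classes generate the
ideal `I_{Z'}/I_Z` of `R/I_Z` (equivalently `I_Z + (F₁,…,F_p) = I_{Z'}`), and no
fewer than `p` bihomogeneous forms have classes generating `I_{Z'}/I_Z`. -/
def IsMinSepSet (IZ IZ' : Ideal (BiRing k n m)) {p : ℕ}
    (F : Fin p → BiRing k n m) : Prop :=
  (∀ j, IsSeparator IZ IZ' (F j)) ∧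
  IZ ⊔ Ideal.span (Set.range F) = IZ' ∧
  ∀ q : ℕ, q < p → ∀ G : Fin q → BiRing k n m,
    (∀ j, ∃ d, BihomOfDeg (G j) d) → IZ ⊔ Ideal.span (Set.range G) ≠ IZ'

/-- A family `F₁,…,F_p` of forms with `deg Fⱼ = d j` is a *good* set (of minimal
separators) if for every `t ∈ ℕ²` the classes of `x₀^{t₁-dⱼ₁} y₀^{t₂-dⱼ₂} Fⱼ`
(over those `j` with `d j ⪯ t` componentwise) are linearly independent in
`(I_{Z'}/I_Z)_t`; i.e. any `k`-linear combination lying in `I_Z` has all its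
coefficients equal to zero. -/
def IsGoodSepSet {p : ℕ} (IZ : Ideal (BiRing k n m)) (F : Fin p → BiRing k n m)
    (d : Fin p → ℕ × ℕ) : Prop :=
  ∀ t : ℕ × ℕ, ∀ c : Fin p → k,
    (∑ j ∈ Finset.univ.filter (fun j => (d j).1 ≤ t.1 ∧ (d j).2 ≤ t.2),
        c j • (X (Sum.inl 0) ^ (t.1 - (d j).1) * X (Sum.inr 0) ^ (t.2 - (d j).2) * F j))
      ∈ IZ →
    ∀ j : Fin p, (d j).1 ≤ t.1 → (d j).2 ≤ t.2 → c j = 0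


/-!
Independence of the classes is exactly the goodness hypothesis. For spanning, write
`H ∈ I_{Z'} = I_Z + (F₁,…,F_p)` and take the degree-`t` component: modulo `I_Z`,
`H ≡ ∑ Aⱼ Fⱼ` with `Aⱼ` bihomogeneous of degree `t - dⱼ`. Since `I_{Pᵢ} I_{Z'} ⊆ I_Z`, each `Aⱼ` may
be replaced by any form congruent to it modulo `I_{Pᵢ}`. Now `x₀, y₀ ∉ I_{Pᵢ}`, for otherwise
`x₀ Fⱼ ∈ I_{Pᵢ} I_{Z'} ⊆ I_Z` and `x₀` being a nonzerodivisor would give `Fⱼ ∈ I_Z`. Hence the `n`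
linear forms of `I_{Pᵢ}` of degree `(1,0)` together with `x₀` span all `x`-linear forms, and
likewise for `y`; so every variable, hence every bihomogeneous form of degree `e`, is congruent
modulo `I_{Pᵢ}` to a scalar multiple of `x₀^{e₁} y₀^{e₂}`.
-/

open Set Submodule in
theorem exists_sub_smul_mem_span_of_linearIndependent {K V : Type*} [Field K] [AddCommGroup V]
    [Module K V] {q : ℕ} {b : Fin (q + 1) → V} (hb : LinearIndependent K b)
    {L : Fin q → V} (hL : LinearIndependent K L) (hLb : ∀ j, L j ∈ span K (range b))
    {x : V} (hx : x ∈ span K (range b)) (hxL : x ∉ span K (range L))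
    {y : V} (hy : y ∈ span K (range b)) :
    ∃ c : K, y - c • x ∈ span K (range L) := by
  have hcons : LinearIndependent K (Fin.cons x L : Fin (q + 1) → V) :=
    linearIndependent_finCons.2 ⟨hL, hxL⟩
  have hspan : span K (range (Fin.cons x L : Fin (q + 1) → V)) = span K (range b) := by
    have : FiniteDimensional K (span K (range b)) := .span_of_finite K (finite_range b)
    refine eq_of_le_of_finrank_eq (span_le.2 ?_) ?_
    · rw [Fin.range_cons]
      exact insert_subset hx (range_subset_iff.2 hLb)
    · rw [finrank_span_eq_card hcons, finrank_span_eq_card hb]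
  rw [← hspan, Fin.range_cons, mem_span_insert] at hy
  obtain ⟨c, z, hz, rfl⟩ := hy
  exact ⟨c, by simpa using hz⟩

namespace MvPolynomial

variable {σ R : Type*} [CommSemiring R]

theorem IsWeightedHomogeneous.mem_span_X {M : Type*} [AddCommMonoid M] {w : σ → M}
    {A : MvPolynomial σ R} {e : M} (hA : IsWeightedHomogeneous w A e)
    (h1 : A.IsHomogeneous 1) : A ∈ Submodule.span R (X '' {v | w v = e}) := by
  have hA1 : A ∈ Submodule.span R (Set.range X) :=
    homogeneousSubmodule_one_eq_span_X (σ := σ) (R := R) ▸ h1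
  have := Submodule.mem_map_of_mem (f := weightedHomogeneousComponent w e) hA1
  rw [Submodule.map_span, hA.weightedHomogeneousComponent_same] at this
  refine Submodule.span_le.2 ?_ this
  rintro _ ⟨_, ⟨v, rfl⟩, rfl⟩
  by_cases hv : w v = e
  · subst hv
    rw [(isWeightedHomogeneous_X R w v).weightedHomogeneousComponent_same]
    exact Submodule.subset_span ⟨v, rfl, rfl⟩
  · rw [(isWeightedHomogeneous_X R w v).weightedHomogeneousComponent_ne e (Ne.symm hv)]
    exact Submodule.zero_mem _

variable {S : Type*} [CommSemiring S] [Algebra R S] {w : σ → ℕ × ℕ}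

theorem algHom_monomial_eq_smul {f : MvPolynomial σ R →ₐ[R] S} {x y : S} {c : σ → R}
    (hf : ∀ v, f (X v) = c v • (x ^ (w v).1 * y ^ (w v).2)) (s : σ →₀ ℕ) (r : R) :
    f (monomial s r) = (r * s.prod fun v e => c v ^ e) •
      (x ^ (Finsupp.weight w s).1 * y ^ (Finsupp.weight w s).2) := by
  rw [monomial_eq, map_mul, algHom_C, map_finsuppProd, ← Algebra.smul_def]
  simp only [map_pow, hf, Finsupp.prod, smul_pow, mul_pow, ← pow_mul, Finset.prod_smul,
    Finset.prod_mul_distrib, Finset.prod_pow_eq_pow_sum, smul_smul]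
  congr 3 <;> simp [Finsupp.weight_apply, Finsupp.sum, Prod.fst_sum, Prod.snd_sum, mul_comm]

theorem IsWeightedHomogeneous.exists_algHom_eq_smul {f : MvPolynomial σ R →ₐ[R] S} {x y : S}
    {c : σ → R} (hf : ∀ v, f (X v) = c v • (x ^ (w v).1 * y ^ (w v).2))
    {A : MvPolynomial σ R} {e : ℕ × ℕ} (hA : IsWeightedHomogeneous w A e) :
    ∃ r : R, f A = r • (x ^ e.1 * y ^ e.2) := by
  refine ⟨∑ s ∈ A.support, coeff s A * s.prod fun v k => c v ^ k, ?_⟩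
  conv_lhs => rw [← A.support_sum_monomial_coeff]
  rw [map_sum, Finset.sum_smul]
  refine Finset.sum_congr rfl fun s hs => ?_
  rw [algHom_monomial_eq_smul hf, hA (mem_support_iff.1 hs)]

theorem exists_X_sub_smul_X_mem {K ι : Type*} [Field K] {q : ℕ}
    {e : Fin (q + 1) → ι} (he : Function.Injective e) {L : Fin q → MvPolynomial ι K}
    (hL : LinearIndependent K L) (hLe : ∀ a, L a ∈ Submodule.span K (Set.range fun i => X (e i)))
    {I : Ideal (MvPolynomial ι K)} (hLI : ∀ a, L a ∈ I) (he0 : X (e 0) ∉ I) (i : Fin (q + 1)) :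
    ∃ c : K, X (e i) - c • X (e 0) ∈ I := by
  have hspan : Submodule.span K (Set.range L) ≤ I.restrictScalars K :=
    Submodule.span_le.2 (Set.range_subset_iff.2 hLI)
  obtain ⟨c, hc⟩ := exists_sub_smul_mem_span_of_linearIndependent
    ((linearIndependent_X ι K).comp e he) hL hLe (Submodule.subset_span ⟨0, rfl⟩)
    (fun h => he0 (hspan h)) (Submodule.subset_span ⟨i, rfl⟩)
  exact ⟨c, hspan hc⟩

end MvPolynomial

theorem Ideal.IsHomogeneous.pow {ι σ A : Type*} [CommSemiring A] [DecidableEq ι] [AddMonoid ι]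
    [SetLike σ A] [AddSubmonoidClass σ A] {𝒜 : ι → σ} [GradedRing 𝒜] {I : Ideal A}
    (hI : I.IsHomogeneous 𝒜) (e : ℕ) : (I ^ e).IsHomogeneous 𝒜 := by
  induction e with
  | zero => simpa using Ideal.IsHomogeneous.top 𝒜
  | succ e ih => rw [pow_succ]; exact ih.mul hI

attribute [local instance] MvPolynomial.weightedGradedAlgebra

namespace MvPolynomial

variable {σ R : Type*} [CommRing R] {w : σ → ℕ × ℕ}

theorem weightedHomogeneousComponent_mul_of_le {a F : MvPolynomial σ R} {d t : ℕ × ℕ}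
    (hF : IsWeightedHomogeneous w F d) (h : d ≤ t) :
    weightedHomogeneousComponent w t (a * F) = weightedHomogeneousComponent w (t - d) a * F := by
  simp_rw [← weightedDecomposition.decompose'_apply]
  exact DirectSum.coe_decompose_mul_of_right_mem_of_le
    (weightedHomogeneousSubmodule R w) (a := a) hF h

theorem weightedHomogeneousComponent_mul_of_not_le {a F : MvPolynomial σ R} {d t : ℕ × ℕ}
    (hF : IsWeightedHomogeneous w F d) (h : ¬d ≤ t) :
    weightedHomogeneousComponent w t (a * F) = 0 := by
  simp_rw [← weightedDecomposition.decompose'_apply]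
  exact DirectSum.coe_decompose_mul_of_right_mem_of_not_le
    (weightedHomogeneousSubmodule R w) (a := a) hF h

variable {I : Ideal (MvPolynomial σ R)} {ι : Type*} [Fintype ι] {F : ι → MvPolynomial σ R}
  {d : ι → ℕ × ℕ} {H : MvPolynomial σ R} {t : ℕ × ℕ}

theorem exists_eq_add_sum_mul_of_mem_sup_span
    (hI : I.IsHomogeneous (weightedHomogeneousSubmodule R w))
    (hF : ∀ j, IsWeightedHomogeneous w (F j) (d j)) (hH : H ∈ I ⊔ Ideal.span (Set.range F))
    (hHt : IsWeightedHomogeneous w H t) :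
    ∃ g ∈ I, ∃ A : ι → MvPolynomial σ R, (∀ j, IsWeightedHomogeneous w (A j) (t - d j)) ∧
      H = g + ∑ j ∈ Finset.univ.filter (fun j => (d j).1 ≤ t.1 ∧ (d j).2 ≤ t.2), A j * F j := by
  obtain ⟨g, hg, h, hh, rfl⟩ := Submodule.mem_sup.1 hH
  obtain ⟨a, rfl⟩ := Ideal.mem_span_range_iff_exists_fun.1 hh
  refine ⟨weightedHomogeneousComponent w t g, ?_,
    fun j => weightedHomogeneousComponent w (t - d j) (a j),
    fun j => weightedHomogeneousComponent_isWeightedHomogeneous _ _, ?_⟩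
  · exact weightedHomogeneousComponent_mem_of_mem R w hI hg t
  · rw [← hHt.weightedHomogeneousComponent_same, map_add, map_sum, Finset.sum_filter]
    refine congrArg _ (Finset.sum_congr rfl fun j _ => ?_)
    split_ifs with hdt
    · exact weightedHomogeneousComponent_mul_of_le (hF j) hdt
    · exact weightedHomogeneousComponent_mul_of_not_le (hF j) hdt

theorem exists_sub_sum_smul_mul_mem (hI : I.IsHomogeneous (weightedHomogeneousSubmodule R w))
    (hF : ∀ j, IsWeightedHomogeneous w (F j) (d j)) (hH : H ∈ I ⊔ Ideal.span (Set.range F))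
    (hHt : IsWeightedHomogeneous w H t) {Q : Ideal (MvPolynomial σ R)}
    (hQ : Q * (I ⊔ Ideal.span (Set.range F)) ≤ I) (M : ι → MvPolynomial σ R)
    (hM : ∀ j A, IsWeightedHomogeneous w A (t - d j) → ∃ c : R, A - c • M j ∈ Q) :
    ∃ c : ι → R, H - ∑ j ∈ Finset.univ.filter (fun j => (d j).1 ≤ t.1 ∧ (d j).2 ≤ t.2),
      c j • (M j * F j) ∈ I := by
  obtain ⟨g, hg, A, hA, rfl⟩ := exists_eq_add_sum_mul_of_mem_sup_span hI hF hH hHt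
  choose c hc using fun j => hM j (A j) (hA j)
  refine ⟨c, ?_⟩
  rw [add_sub_assoc, ← Finset.sum_sub_distrib]
  refine add_mem hg (Submodule.sum_mem _ fun j _ => ?_)
  rw [← smul_mul_assoc, ← sub_mul]
  exact hQ (Ideal.mul_mem_mul (hc j) (Ideal.mem_sup_right (Ideal.subset_span ⟨j, rfl⟩)))

end MvPolynomial

theorem degree_eq_weight_biWeight_fst_add_snd (s : Fin (n + 1) ⊕ Fin (m + 1) →₀ ℕ) :
    s.degree = (Finsupp.weight (biWeight n m) s).1 + (Finsupp.weight (biWeight n m) s).2 := by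
  simp only [Finsupp.degree_eq_sum, Finsupp.weight_eq_sum, Prod.fst_sum, Prod.snd_sum,
    ← Finset.sum_add_distrib]
  refine Finset.sum_congr rfl fun v _ => ?_
  cases v <;> simp [biWeight]

theorem BihomOfDeg.isHomogeneous {A : BiRing k n m} {e : ℕ × ℕ} (hA : BihomOfDeg A e) :
    A.IsHomogeneous (e.1 + e.2) := fun s hs => by
  rw [← hA hs, ← degree_eq_weight_biWeight_fst_add_snd, Finsupp.degree_eq_weight_one]
  rfl

theorem BihomOfDeg.mem_span_X_inl {A : BiRing k n m} (hA : BihomOfDeg A (1, 0)) :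
    A ∈ Submodule.span k (Set.range fun i => X (Sum.inl i)) := by
  have h := IsWeightedHomogeneous.mem_span_X (R := k) hA hA.isHomogeneous
  rwa [show {v | biWeight n m v = (1, 0)} = Set.range Sum.inl by
    ext (_ | _) <;> simp [biWeight], ← Set.range_comp] at h

theorem BihomOfDeg.mem_span_X_inr {A : BiRing k n m} (hA : BihomOfDeg A (0, 1)) :
    A ∈ Submodule.span k (Set.range fun j => X (Sum.inr j)) := by
  have h := IsWeightedHomogeneous.mem_span_X (R := k) hA hA.isHomogeneous
  rwa [show {v | biWeight n m v = (0, 1)} = Set.range Sum.inr by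
    ext (_ | _) <;> simp [biWeight], ← Set.range_comp] at h

theorem IsPointIdeal.exists_X_sub_smul_mem {I : Ideal (BiRing k n m)} (hI : IsPointIdeal I)
    (hx : X (Sum.inl 0) ∉ I) (hy : X (Sum.inr 0) ∉ I) (v : Fin (n + 1) ⊕ Fin (m + 1)) :
    ∃ c : k, X v - c • (X (Sum.inl 0) ^ (biWeight n m v).1 * X (Sum.inr 0) ^ (biWeight n m v).2)
      ∈ I := by
  obtain ⟨L, L', hL, hL', hind, rfl⟩ := hI
  rcases v with i | j
  · simpa [biWeight] using exists_X_sub_smul_X_mem Sum.inl_injective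
      (hind.comp _ Sum.inl_injective) (fun a => (hL a).mem_span_X_inl)
      (fun a => Ideal.subset_span (Or.inl ⟨a, rfl⟩)) hx i
  · simpa [biWeight] using exists_X_sub_smul_X_mem Sum.inr_injective
      (hind.comp _ Sum.inr_injective) (fun b => (hL' b).mem_span_X_inr)
      (fun b => Ideal.subset_span (Or.inr ⟨b, rfl⟩)) hy j

theorem IsPointIdeal.exists_sub_smul_mem {I : Ideal (BiRing k n m)} (hI : IsPointIdeal I)
    (hx : X (Sum.inl 0) ∉ I) (hy : X (Sum.inr 0) ∉ I) {A : BiRing k n m} {e : ℕ × ℕ}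
    (hA : BihomOfDeg A e) :
    ∃ c : k, A - c • (X (Sum.inl 0) ^ e.1 * X (Sum.inr 0) ^ e.2) ∈ I := by
  choose c hc using hI.exists_X_sub_smul_mem hx hy
  let π := Ideal.Quotient.mkₐ k I
  have hπ (r : k) (i j : ℕ) : π (r • (X (Sum.inl 0) ^ i * X (Sum.inr 0) ^ j)) =
      r • (π (X (Sum.inl 0)) ^ i * π (X (Sum.inr 0)) ^ j) := by
    rw [map_smul, map_mul, map_pow, map_pow]
  obtain ⟨r, hr⟩ := IsWeightedHomogeneous.exists_algHom_eq_smul (f := π)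
    (fun v => (Ideal.Quotient.eq.2 (hc v)).trans (hπ _ _ _)) hA
  exact ⟨r, Ideal.Quotient.eq.1 (hr.trans (hπ _ _ _).symm)⟩

theorem IsPointIdeal.isHomogeneous {I : Ideal (BiRing k n m)} (hI : IsPointIdeal I) :
    I.IsHomogeneous (weightedHomogeneousSubmodule k (biWeight n m)) := by
  obtain ⟨L, L', hL, hL', -, rfl⟩ := hI
  refine Ideal.homogeneous_span _ _ ?_
  rintro _ (⟨a, rfl⟩ | ⟨b, rfl⟩)
  · exact ⟨(1, 0), hL a⟩
  · exact ⟨(0, 1), hL' b⟩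

theorem fatIdeal_isHomogeneous {s : ℕ} {P : Fin s → Ideal (BiRing k n m)}
    (hP : ∀ j, IsPointIdeal (P j)) (mult : Fin s → ℕ) :
    (fatIdeal P mult).IsHomogeneous (weightedHomogeneousSubmodule k (biWeight n m)) :=
  Ideal.IsHomogeneous.iInf fun j => (hP j).isHomogeneous.pow (mult j)

theorem mul_fatIdeal_update_le {s : ℕ} (P : Fin s → Ideal (BiRing k n m)) {mult : Fin s → ℕ}
    {i : Fin s} (hi : 1 ≤ mult i) :
    P i * fatIdeal P (Function.update mult i (mult i - 1)) ≤ fatIdeal P mult := by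
  unfold fatIdeal
  refine le_iInf fun j => ?_
  have hj := iInf_le (fun l => P l ^ Function.update mult i (mult i - 1) l) j
  rcases eq_or_ne j i with rfl | hne
  · calc P j * ⨅ l, P l ^ Function.update mult j (mult j - 1) l
        ≤ P j * P j ^ (mult j - 1) := by simpa using Ideal.mul_mono_right hj
      _ = P j ^ mult j := by rw [← pow_succ', Nat.sub_add_cancel hi]
  · exact Ideal.mul_le_right.trans (by simpa [hne] using hj)

theorem stmt5_general {s : ℕ}
    (P : Fin s → Ideal (BiRing k n m)) (mult : Fin s → ℕ)
    (hP : ∀ j, IsPointIdeal (P j))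
    (hmult : ∀ j, 1 ≤ mult j) (i : Fin s)
    (IZ IZ' : Ideal (BiRing k n m))
    (hIZ : IZ = fatIdeal P mult)
    (hIZ' : IZ' = fatIdeal P (Function.update mult i (mult i - 1)))
    (hx : ∀ g : BiRing k n m, X (Sum.inl 0) * g ∈ IZ → g ∈ IZ)
    (hy : ∀ g : BiRing k n m, X (Sum.inr 0) * g ∈ IZ → g ∈ IZ)
    {p : ℕ} (F : Fin p → BiRing k n m) (d : Fin p → ℕ × ℕ)
    (hdeg : ∀ j, BihomOfDeg (F j) (d j))
    (hmin : IsMinSepSet IZ IZ' F)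
    (hgood : IsGoodSepSet IZ F d) :
    ∀ t : ℕ × ℕ,
      (∀ H, H ∈ IZ' → BihomOfDeg H t →
        ∃ c : Fin p → k,
          H - (∑ j ∈ Finset.univ.filter (fun j => (d j).1 ≤ t.1 ∧ (d j).2 ≤ t.2),
            c j • (X (Sum.inl 0) ^ (t.1 - (d j).1) * X (Sum.inr 0) ^ (t.2 - (d j).2) * F j)) ∈ IZ) ∧
      (∀ c : Fin p → k,
        (∑ j ∈ Finset.univ.filter (fun j => (d j).1 ≤ t.1 ∧ (d j).2 ≤ t.2),
            c j • (X (Sum.inl 0) ^ (t.1 - (d j).1) * X (Sum.inr 0) ^ (t.2 - (d j).2) * F j)) ∈ IZ →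
        ∀ j : Fin p, (d j).1 ≤ t.1 → (d j).2 ≤ t.2 → c j = 0) := by
  intro t
  refine ⟨fun H hH hHt => ?_, hgood t⟩
  obtain ⟨hsep, hsup, -⟩ := hmin
  subst hIZ hIZ'
  have hIZ_hom := fatIdeal_isHomogeneous hP mult
  have hmul := mul_fatIdeal_update_le P (hmult i)
  rw [← hsup] at hH hmul
  refine exists_sub_sum_smul_mul_mem hIZ_hom hdeg hH hHt hmul _ fun j A hA => ?_
  obtain ⟨-, hFj, hFj_not⟩ := hsep j
  have notMem_P {z : BiRing k n m} (hz : ∀ g, z * g ∈ fatIdeal P mult → g ∈ fatIdeal P mult) :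
      z ∉ P i := fun h => hFj_not (hz _ (hmul (Ideal.mul_mem_mul h (hsup ▸ hFj))))
  simpa only [Prod.fst_sub, Prod.snd_sub] using
    (hP i).exists_sub_smul_mem (notMem_P hx) (notMem_P hy) hA

/-- Theorem 4.3(i): if `{F₁,…,F_p}` is a good set of minimal
separators, then for every `t ∈ ℕ²` the classes of the elements
`x₀^{t₁-dⱼ₁} y₀^{t₂-dⱼ₂} Fⱼ` (over those `j` with `d j ⪯ t`) form a `k`-basis of
`(I_{Z'}/I_Z)_t`: they span (first conjunct) and are linearly independent
(second conjunct). -/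
theorem stmt5 [IsAlgClosed k] [CharZero k] {s : ℕ}
    (P : Fin s → Ideal (BiRing k n m)) (mult : Fin s → ℕ)
    (hP : ∀ j, IsPointIdeal (P j)) (hinj : Function.Injective P)
    (hmult : ∀ j, 1 ≤ mult j) (i : Fin s)
    (IZ IZ' : Ideal (BiRing k n m))
    (hIZ : IZ = fatIdeal P mult)
    (hIZ' : IZ' = fatIdeal P (Function.update mult i (mult i - 1)))
    (hx : ∀ g : BiRing k n m, X (Sum.inl 0) * g ∈ IZ → g ∈ IZ)
    (hy : ∀ g : BiRing k n m, X (Sum.inr 0) * g ∈ IZ → g ∈ IZ)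
    (hx' : ∀ g : BiRing k n m, X (Sum.inl 0) * g ∈ IZ' → g ∈ IZ')
    (hy' : ∀ g : BiRing k n m, X (Sum.inr 0) * g ∈ IZ' → g ∈ IZ')
    {p : ℕ} (F : Fin p → BiRing k n m) (d : Fin p → ℕ × ℕ)
    (hdeg : ∀ j, BihomOfDeg (F j) (d j))
    (hmin : IsMinSepSet IZ IZ' F)
    (hgood : IsGoodSepSet IZ F d) :
    ∀ t : ℕ × ℕ,
      (∀ H, H ∈ IZ' → BihomOfDeg H t →
        ∃ c : Fin p → k,
          H - (∑ j ∈ Finset.univ.filter (fun j => (d j).1 ≤ t.1 ∧ (d j).2 ≤ t.2),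
            c j • (X (Sum.inl 0) ^ (t.1 - (d j).1) * X (Sum.inr 0) ^ (t.2 - (d j).2) * F j)) ∈ IZ) ∧
      (∀ c : Fin p → k,
        (∑ j ∈ Finset.univ.filter (fun j => (d j).1 ≤ t.1 ∧ (d j).2 ≤ t.2),
            c j • (X (Sum.inl 0) ^ (t.1 - (d j).1) * X (Sum.inr 0) ^ (t.2 - (d j).2) * F j)) ∈ IZ →
        ∀ j : Fin p, (d j).1 ≤ t.1 → (d j).2 ≤ t.2 → c j = 0) :=
  stmt5_general P mult hP hmult i IZ IZ' hIZ hIZ' hx hy F d hdeg hmin hgood
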